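/- For any d > 0, the iterates of φ_d converge as follows: for every x ∈ [0, α_0(d)), lim_{t→∞} φ_d^{∘t}(x) = α_*(d), and for every x ∈ (α_0(d), 1], lim_{t→∞} φ_d^{∘t}(x) = α^*(d), where φ_d^{∘t} denotes the t-fold iterate of φ_d. -/

import Mathlib

open Filter Topology MeasureTheory ProbabilityTheory

noncomputable section

/-- `φ_d(α) = 1 − exp(−d·exp(−d(1−α)))`. -/
def phiFn (d α : ℝ) : ℝ := 1 - Real.exp (-d * Real.exp (-d * (1 - α)))

/-- `Φ_d(α) = exp(−d·exp(−d(1−α))) + (1 + d(1−α))·exp(−d(1−α)) − 1`. -/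
def PhiFn (d α : ℝ) : ℝ :=
  Real.exp (-d * Real.exp (-d * (1 - α))) + (1 + d * (1 - α)) * Real.exp (-d * (1 - α)) - 1

/-- `α_*(d)`: the smallest fixed point of `φ_d` in `[0,1]`. -/
def alphaMin (d : ℝ) : ℝ := sInf {α : ℝ | α ∈ Set.Icc (0:ℝ) 1 ∧ phiFn d α = α}

/-- `α^*(d)`: the largest fixed point of `φ_d` in `[0,1]`. -/
def alphaMax (d : ℝ) : ℝ := sSup {α : ℝ | α ∈ Set.Icc (0:ℝ) 1 ∧ phiFn d α = α}

/-- `α_0(d)`: for `d ≤ e` equal to `α_*(d)`; for `d > e` the unique fixed point of `φ_d`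
in the open interval `(α_*(d), α^*(d))`. -/
def alphaMid (d : ℝ) : ℝ :=
  if d ≤ Real.exp 1 then alphaMin d
  else sInf {α : ℝ | α ∈ Set.Ioo (alphaMin d) (alphaMax d) ∧ phiFn d α = α}

/-!
`φ_d` is increasing and continuous, so an orbit moves monotonically towards the first fixed point
in the direction of the sign of `φ_d(x) − x`, and converges to it; everything reduces to the sign
pattern of `φ_d − id`. With `s = d·e^{−d(1−α)}` one has `φ_d = 1 − e^{−s}` and
`φ_d' = d·s·e^{−s}`, which increases up to the inflection point `α = 1 − log d / d` (where `s = 1`)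
and decreases after it, with maximum `d/e`. For `d ≤ e` this gives `φ_d' ≤ 1` with equality at
most once, so `φ_d − id` is strictly decreasing and has a single zero. For `d > e`, `φ_d − id` is
strictly convex left of the inflection point and strictly concave right of it, negative at the
inflection point and positive at `1 − 1/d` (both because `log d < d/e`); together with
`φ_d(0) > 0` and `φ_d(1) < 1` this leaves exactly three fixed points, with `φ_d` alternately above
and below the diagonal between them.
-/

open Set Function Real

namespace Monotone

variable {α : Type*} [ConditionallyCompleteLinearOrder α] [TopologicalSpace α] [OrderTopology α]
  {f : α → α}

theorem tendsto_iterate_of_lt_map (hf : Monotone f) (hc : Continuous f) {x a : α} (hxa : x ≤ a)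
    (ha : IsFixedPt f a) (hlt : ∀ y ∈ Ico x a, y < f y) :
    Tendsto (fun n => f^[n] x) atTop (𝓝 a) := by
  have hx : x ≤ f x := by
    rcases hxa.lt_or_eq with h | rfl
    · exact (hlt x ⟨le_rfl, h⟩).le
    · exact ha.ge
  have hbound : ∀ n, f^[n] x ≤ a := fun n => (ha.iterate n).eq ▸ hf.iterate n hxa
  have hlim := tendsto_atTop_ciSup (hf.monotone_iterate_of_le_map hx)
    ⟨a, forall_mem_range.2 hbound⟩
  have hfix := isFixedPt_of_tendsto_iterate hlim hc.continuousAt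
  have hxℓ : x ≤ ⨆ n, f^[n] x := le_ciSup_of_le ⟨a, forall_mem_range.2 hbound⟩ 0 le_rfl
  rcases (ciSup_le hbound).lt_or_eq with h | h
  · exact absurd hfix (hlt _ ⟨hxℓ, h⟩).ne'
  · rwa [h] at hlim

theorem tendsto_iterate_of_map_lt (hf : Monotone f) (hc : Continuous f) {x a : α} (hax : a ≤ x)
    (ha : IsFixedPt f a) (hlt : ∀ y ∈ Ioc a x, f y < y) :
    Tendsto (fun n => f^[n] x) atTop (𝓝 a) :=
  tendsto_iterate_of_lt_map (α := αᵒᵈ) hf.dual hc hax ha fun y hy => hlt y ⟨hy.2, hy.1⟩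

theorem tendsto_iterate_of_isFixedPt (hf : Monotone f) (hc : Continuous f) {x a : α}
    (ha : IsFixedPt f a) (hlt : ∀ y ∈ Ico x a, y < f y) (hgt : ∀ y ∈ Ioc a x, f y < y) :
    Tendsto (fun n => f^[n] x) atTop (𝓝 a) :=
  (le_total x a).elim (hf.tendsto_iterate_of_lt_map hc · ha hlt)
    (hf.tendsto_iterate_of_map_lt hc · ha hgt)

end Monotone

section

variable {𝕜 : Type*} [Field 𝕜] [LinearOrder 𝕜] [IsStrictOrderedRing 𝕜] {s : Set 𝕜} {f : 𝕜 → 𝕜}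
  {a b c : 𝕜}

theorem StrictConvexOn.lt_of_mem_Ioo (hf : StrictConvexOn 𝕜 s f) (ha : a ∈ s) (hc : c ∈ s)
    (hb : b ∈ Ioo a c) : f b < max (f a) (f c) :=
  hf.lt_on_openSegment ha hc (hb.1.trans hb.2).ne (by rwa [openSegment_eq_Ioo (hb.1.trans hb.2)])

theorem StrictConcaveOn.lt_of_mem_Ioo (hf : StrictConcaveOn 𝕜 s f) (ha : a ∈ s) (hc : c ∈ s)
    (hb : b ∈ Ioo a c) : min (f a) (f c) < f b :=
  hf.lt_on_openSegment ha hc (hb.1.trans hb.2).ne (by rwa [openSegment_eq_Ioo (hb.1.trans hb.2)])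

end

namespace Continuous

variable {f : ℝ → ℝ} {a b : ℝ}

theorem exists_isFixedPt_mem_Ioo (hf : Continuous f) (hab : a ≤ b) (ha : a < f a) (hb : f b < b) :
    ∃ z ∈ Ioo a b, IsFixedPt f z := by
  obtain ⟨z, hz, hz0⟩ := intermediate_value_Ioo' hab (hf.sub continuous_id).continuousOn
    (show (0 : ℝ) ∈ Ioo (f b - b) (f a - a) from ⟨by simpa, by simpa⟩)
  exact ⟨z, hz, sub_eq_zero.1 hz0⟩

theorem exists_isFixedPt_mem_Ioo' (hf : Continuous f) (hab : a ≤ b) (ha : f a < a) (hb : b < f b) :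
    ∃ z ∈ Ioo a b, IsFixedPt f z := by
  obtain ⟨z, hz, hz0⟩ := intermediate_value_Ioo hab (hf.sub continuous_id).continuousOn
    (show (0 : ℝ) ∈ Ioo (f a - a) (f b - b) from ⟨by simpa, by simpa⟩)
  exact ⟨z, hz, sub_eq_zero.1 hz0⟩

end Continuous

-- `f` crosses the diagonal downwards at `z₁` and `z₃` and upwards at `z₂`; the degenerate case
-- `z₁ = z₂ = z₃` is a single attracting fixed point.
structure FixedPointPattern {α : Type*} [LinearOrder α] (f : α → α) (z₁ z₂ z₃ : α) : Prop where
  le₁₂ : z₁ ≤ z₂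
  le₂₃ : z₂ ≤ z₃
  isFixedPt₁ : IsFixedPt f z₁
  isFixedPt₂ : IsFixedPt f z₂
  isFixedPt₃ : IsFixedPt f z₃
  lt_map_of_lt : ∀ y < z₁, y < f y
  map_lt_of_mem_Ioo : ∀ y ∈ Ioo z₁ z₂, f y < y
  lt_map_of_mem_Ioo : ∀ y ∈ Ioo z₂ z₃, y < f y
  map_lt_of_gt : ∀ y, z₃ < y → f y < y

namespace FixedPointPattern

section LinearOrder

variable {α : Type*} [LinearOrder α] {f : α → α} {z₁ z₂ z₃ y : α}

theorem mem_Icc_of_isFixedPt (h : FixedPointPattern f z₁ z₂ z₃) (hy : IsFixedPt f y) :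
    y ∈ Icc z₁ z₃ :=
  ⟨not_lt.1 fun hlt => (h.lt_map_of_lt y hlt).ne' hy,
    not_lt.1 fun hlt => (h.map_lt_of_gt y hlt).ne hy⟩

theorem eq_of_isFixedPt_of_mem_Ioo (h : FixedPointPattern f z₁ z₂ z₃) (hy : IsFixedPt f y)
    (hy' : y ∈ Ioo z₁ z₃) : y = z₂ := by
  rcases lt_trichotomy y z₂ with hlt | heq | hgt
  · exact absurd hy (h.map_lt_of_mem_Ioo y ⟨hy'.1, hlt⟩).ne
  · exact heq
  · exact absurd hy (h.lt_map_of_mem_Ioo y ⟨hgt, hy'.2⟩).ne'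

end LinearOrder

section Dynamics

variable {α : Type*} [ConditionallyCompleteLinearOrder α] [TopologicalSpace α] [OrderTopology α]
  {f : α → α} {z₁ z₂ z₃ x : α}

theorem tendsto_iterate_of_lt (h : FixedPointPattern f z₁ z₂ z₃) (hf : Monotone f)
    (hc : Continuous f) (hx : x < z₂) : Tendsto (fun n => f^[n] x) atTop (𝓝 z₁) :=
  hf.tendsto_iterate_of_isFixedPt hc h.isFixedPt₁ (fun y hy => h.lt_map_of_lt y hy.2)
    fun y hy => h.map_lt_of_mem_Ioo y ⟨hy.1, hy.2.trans_lt hx⟩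

theorem tendsto_iterate_of_gt (h : FixedPointPattern f z₁ z₂ z₃) (hf : Monotone f)
    (hc : Continuous f) (hx : z₂ < x) : Tendsto (fun n => f^[n] x) atTop (𝓝 z₃) :=
  hf.tendsto_iterate_of_isFixedPt hc h.isFixedPt₃
    (fun y hy => h.lt_map_of_mem_Ioo y ⟨hx.trans_le hy.1, hy.2⟩)
    fun y hy => h.map_lt_of_gt y hy.1

end Dynamics

theorem of_strictAnti {α : Type*} [AddCommGroup α] [LinearOrder α] [IsOrderedAddMonoid α]
    {f : α → α} {z : α} (hf : StrictAnti fun x => f x - x) (hz : IsFixedPt f z) :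
    FixedPointPattern f z z z where
  le₁₂ := le_rfl
  le₂₃ := le_rfl
  isFixedPt₁ := hz
  isFixedPt₂ := hz
  isFixedPt₃ := hz
  lt_map_of_lt y hy := sub_pos.1 (by simpa [hz.eq] using hf hy)
  map_lt_of_mem_Ioo y hy := absurd hy (by simp)
  lt_map_of_mem_Ioo y hy := absurd hy (by simp)
  map_lt_of_gt y hy := sub_neg.1 (by simpa [hz.eq] using hf hy)

theorem of_convex_concave {𝕜 : Type*} [Field 𝕜] [LinearOrder 𝕜] [IsStrictOrderedRing 𝕜]
    {f : 𝕜 → 𝕜} {p q z₁ z₂ z₃ : 𝕜}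
    (hcvx : StrictConvexOn 𝕜 (Iic p) fun x => f x - x)
    (hccv : StrictConcaveOn 𝕜 (Ici p) fun x => f x - x) (hp : f p < p) (hq : q < f q)
    (h₁ : z₁ < p) (h₂ : z₂ ∈ Ioo p q) (h₃ : q < z₃)
    (hz₁ : IsFixedPt f z₁) (hz₂ : IsFixedPt f z₂) (hz₃ : IsFixedPt f z₃) :
    FixedPointPattern f z₁ z₂ z₃ where
  le₁₂ := (h₁.trans h₂.1).le
  le₂₃ := (h₂.2.trans h₃).le
  isFixedPt₁ := hz₁
  isFixedPt₂ := hz₂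
  isFixedPt₃ := hz₃
  lt_map_of_lt y hy := by
    by_contra! hle
    have := hcvx.lt_of_mem_Ioo (hy.le.trans h₁.le) self_mem_Iic ⟨hy, h₁⟩
    simp only [hz₁.eq, sub_self, lt_max_iff] at this
    rcases this with h | h <;> linarith
  map_lt_of_mem_Ioo y hy := by
    rcases lt_trichotomy y p with hyp | rfl | hyp
    · have := hcvx.lt_of_mem_Ioo (mem_Iic.2 h₁.le) self_mem_Iic ⟨hy.1, hyp⟩
      simp only [hz₁.eq, sub_self, lt_max_iff] at this
      rcases this with h | h <;> linarith
    · exact hp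
    · by_contra! hle
      have := hccv.lt_of_mem_Ioo (mem_Ici.2 hyp.le) (mem_Ici.2 (hyp.trans (hy.2.trans h₂.2)).le)
        ⟨hy.2, h₂.2⟩
      simp only [hz₂.eq, sub_self, min_lt_iff] at this
      rcases this with h | h <;> linarith
  lt_map_of_mem_Ioo y hy := by
    have := hccv.lt_of_mem_Ioo (mem_Ici.2 h₂.1.le) (mem_Ici.2 (h₂.1.trans (h₂.2.trans h₃)).le) hy
    simp only [hz₂.eq, hz₃.eq, sub_self, min_self] at this
    linarith
  map_lt_of_gt y hy := by
    by_contra! hle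
    have := hccv.lt_of_mem_Ioo (mem_Ici.2 (h₂.1.trans h₂.2).le)
      (mem_Ici.2 (h₂.1.trans (h₂.2.trans (h₃.trans hy))).le) ⟨h₃, hy⟩
    simp only [hz₃.eq, sub_self, min_lt_iff] at this
    rcases this with h | h <;> linarith

end FixedPointPattern

theorem hasDerivAt_mul_exp_neg (s : ℝ) :
    HasDerivAt (fun s : ℝ => s * exp (-s)) ((1 - s) * exp (-s)) s :=
  ((hasDerivAt_id s).mul (hasDerivAt_neg s).exp).congr_deriv
    (by simp only [one_mul, id_eq, mul_neg, mul_one]; ring)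

theorem strictMonoOn_mul_exp_neg : StrictMonoOn (fun s : ℝ => s * exp (-s)) (Iic 1) := by
  refine strictMonoOn_of_deriv_pos (convex_Iic 1) (by fun_prop) fun s hs => ?_
  rw [interior_Iic, mem_Iio] at hs
  rw [(hasDerivAt_mul_exp_neg s).deriv]
  exact mul_pos (by linarith) (exp_pos _)

theorem strictAntiOn_mul_exp_neg : StrictAntiOn (fun s : ℝ => s * exp (-s)) (Ici 1) := by
  refine strictAntiOn_of_deriv_neg (convex_Ici 1) (by fun_prop) fun s hs => ?_
  rw [interior_Ici, mem_Ioi] at hs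
  rw [(hasDerivAt_mul_exp_neg s).deriv]
  exact mul_neg_of_neg_of_pos (by linarith) (exp_pos _)

theorem log_lt_mul_exp_neg_one {x : ℝ} (hx : 0 < x) (hxe : x ≠ exp 1) : log x < x * exp (-1) := by
  have h := log_lt_sub_one_of_pos (mul_pos hx (exp_pos (-1)))
    (by rw [exp_neg, ← div_eq_mul_inv, Ne, div_eq_one_iff_eq (exp_pos 1).ne']; exact hxe)
  rw [log_mul hx.ne' (exp_pos _).ne', log_exp] at h
  linarith

def phiInner (d α : ℝ) : ℝ := d * exp (-d * (1 - α))

def phiInflection (d : ℝ) : ℝ := 1 - log d / d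

variable {d : ℝ}

theorem phiFn_eq (d α : ℝ) : phiFn d α = 1 - exp (-phiInner d α) := by
  simp only [phiFn, phiInner, neg_mul]

theorem phiFn_pos (hd : 0 < d) (α : ℝ) : 0 < phiFn d α := by
  have : 0 < phiInner d α := mul_pos hd (exp_pos _)
  rw [phiFn_eq, sub_pos, exp_lt_one_iff]
  linarith

theorem phiFn_lt_one (d α : ℝ) : phiFn d α < 1 := by
  rw [phiFn_eq]; linarith [exp_pos (-phiInner d α)]

theorem continuous_phiFn (d : ℝ) : Continuous (phiFn d) := by
  unfold phiFn; fun_prop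

theorem strictMono_phiInner (hd : 0 < d) : StrictMono (phiInner d) := fun a b hab =>
  mul_lt_mul_of_pos_left (exp_lt_exp.2 (by nlinarith)) hd

theorem strictMono_phiFn (hd : 0 < d) : StrictMono (phiFn d) := fun a b hab => by
  simpa [phiFn_eq] using strictMono_phiInner hd hab

theorem hasDerivAt_phiFn (d α : ℝ) :
    HasDerivAt (phiFn d) (d * (phiInner d α * exp (-phiInner d α))) α := by
  have hinner : HasDerivAt (phiInner d) (d * phiInner d α) α :=
    ((((hasDerivAt_id α).const_sub 1).const_mul (-d)).exp.const_mul d).congr_deriv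
      (by simp only [phiInner, id]; ring)
  rw [show phiFn d = fun α => 1 - exp (-phiInner d α) from funext (phiFn_eq d)]
  exact (hinner.neg.exp.const_sub 1).congr_deriv (by simp only [Pi.neg_apply]; ring)

theorem phiInner_phiInflection (hd : 0 < d) : phiInner d (phiInflection d) = 1 := by
  rw [phiInner, phiInflection, sub_sub_cancel, neg_mul, mul_div_cancel₀ _ hd.ne', exp_neg,
    exp_log hd, mul_inv_cancel₀ hd.ne']

theorem deriv_phiFn_phiInflection (hd : 0 < d) :
    deriv (phiFn d) (phiInflection d) = d * exp (-1) := by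
  rw [(hasDerivAt_phiFn d _).deriv, phiInner_phiInflection hd, one_mul]

theorem strictMonoOn_deriv_phiFn (hd : 0 < d) :
    StrictMonoOn (deriv (phiFn d)) (Iic (phiInflection d)) := by
  intro a ha b hb hab
  have hb1 : phiInner d b ≤ 1 := phiInner_phiInflection hd ▸ (strictMono_phiInner hd).monotone hb
  simp only [(hasDerivAt_phiFn d _).deriv]
  exact mul_lt_mul_of_pos_left (strictMonoOn_mul_exp_neg
    ((strictMono_phiInner hd hab).le.trans hb1) hb1 (strictMono_phiInner hd hab)) hd

theorem strictAntiOn_deriv_phiFn (hd : 0 < d) :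
    StrictAntiOn (deriv (phiFn d)) (Ici (phiInflection d)) := by
  intro a ha b hb hab
  have ha1 : 1 ≤ phiInner d a := phiInner_phiInflection hd ▸ (strictMono_phiInner hd).monotone ha
  simp only [(hasDerivAt_phiFn d _).deriv]
  exact mul_lt_mul_of_pos_left (strictAntiOn_mul_exp_neg ha1
    (ha1.trans (strictMono_phiInner hd hab).le) (strictMono_phiInner hd hab)) hd

theorem deriv_phiFn_sub_id (d α : ℝ) :
    deriv (fun α => phiFn d α - α) α = deriv (phiFn d) α - 1 :=
  ((hasDerivAt_phiFn d α).differentiableAt.hasDerivAt.sub (hasDerivAt_id α)).deriv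

theorem strictAnti_phiFn_sub_id (hd : 0 < d) (hde : d ≤ exp 1) :
    StrictAnti fun α => phiFn d α - α := by
  have hmax : deriv (phiFn d) (phiInflection d) ≤ 1 := by
    rw [deriv_phiFn_phiInflection hd, exp_neg, ← div_eq_mul_inv]
    exact (div_le_one (exp_pos 1)).2 hde
  have hcont : Continuous fun α => phiFn d α - α := (continuous_phiFn d).sub continuous_id
  refine StrictAntiOn.Iic_union_Ici (a := phiInflection d)
    (strictAntiOn_of_deriv_neg (convex_Iic _) hcont.continuousOn fun α hα => ?_)
    (strictAntiOn_of_deriv_neg (convex_Ici _) hcont.continuousOn fun α hα => ?_)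
  · rw [interior_Iic] at hα
    have := strictMonoOn_deriv_phiFn hd (mem_Iic.2 hα.le) self_mem_Iic hα
    rw [deriv_phiFn_sub_id]; linarith
  · rw [interior_Ici] at hα
    have := strictAntiOn_deriv_phiFn hd self_mem_Ici (mem_Ici.2 hα.le) hα
    rw [deriv_phiFn_sub_id]; linarith

theorem strictConvexOn_phiFn_sub_id (hd : 0 < d) :
    StrictConvexOn ℝ (Iic (phiInflection d)) fun α => phiFn d α - α := by
  have hderiv : StrictMonoOn (deriv (phiFn d)) (interior (Iic (phiInflection d))) := by
    rw [interior_Iic]; exact (strictMonoOn_deriv_phiFn hd).mono Iio_subset_Iic_self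
  exact (hderiv.strictConvexOn_of_deriv (convex_Iic _)
    (continuous_phiFn d).continuousOn).sub_concaveOn (concaveOn_id (convex_Iic _))

theorem strictConcaveOn_phiFn_sub_id (hd : 0 < d) :
    StrictConcaveOn ℝ (Ici (phiInflection d)) fun α => phiFn d α - α := by
  have hderiv : StrictAntiOn (deriv (phiFn d)) (interior (Ici (phiInflection d))) := by
    rw [interior_Ici]; exact (strictAntiOn_deriv_phiFn hd).mono Ioi_subset_Ici_self
  exact (hderiv.strictConcaveOn_of_deriv (convex_Ici _)
    (continuous_phiFn d).continuousOn).sub_convexOn (convexOn_id (convex_Ici _))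

theorem phiFn_phiInflection_lt (hd : 0 < d) (hde : d ≠ exp 1) :
    phiFn d (phiInflection d) < phiInflection d := by
  have := log_lt_mul_exp_neg_one hd hde
  have : log d / d < exp (-1) := by rw [div_lt_iff₀ hd]; linarith
  rw [phiFn_eq, phiInner_phiInflection hd, phiInflection]
  linarith

theorem lt_phiFn_one_sub_inv (hd : 0 < d) (hde : d ≠ exp 1) :
    1 - d⁻¹ < phiFn d (1 - d⁻¹) := by
  have hinner : phiInner d (1 - d⁻¹) = d * exp (-1) := by
    rw [phiInner, sub_sub_cancel, neg_mul, mul_inv_cancel₀ hd.ne']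
  have : exp (-(d * exp (-1))) < d⁻¹ := by
    rw [← exp_log (inv_pos.2 hd), log_inv, exp_lt_exp]
    linarith [log_lt_mul_exp_neg_one hd hde]
  rw [phiFn_eq, hinner]
  linarith

theorem exists_fixedPointPattern_of_le_exp_one (hd : 0 < d) (hde : d ≤ exp 1) :
    ∃ z, FixedPointPattern (phiFn d) z z z := by
  obtain ⟨z, -, hz⟩ := (continuous_phiFn d).exists_isFixedPt_mem_Ioo zero_le_one
    (phiFn_pos hd 0) (phiFn_lt_one d 1)
  exact ⟨z, .of_strictAnti (strictAnti_phiFn_sub_id hd hde) hz⟩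

theorem exists_fixedPointPattern_of_exp_one_lt (hde : exp 1 < d) :
    ∃ z₁ z₂ z₃, z₁ < z₂ ∧ z₂ < z₃ ∧ FixedPointPattern (phiFn d) z₁ z₂ z₃ := by
  have hd : 0 < d := (exp_pos 1).trans hde
  have hp := phiFn_phiInflection_lt hd hde.ne'
  have hq := lt_phiFn_one_sub_inv hd hde.ne'
  have h0p : 0 < phiInflection d := by linarith [phiFn_pos hd (phiInflection d)]
  have hpq : phiInflection d < 1 - d⁻¹ := by
    have : 1 < log d := (lt_log_iff_exp_lt hd).2 hde
    rw [phiInflection, div_eq_mul_inv]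
    nlinarith [inv_pos.2 hd]
  have hq1 : 1 - d⁻¹ < 1 := by linarith [inv_pos.2 hd]
  obtain ⟨z₁, hz₁, hfix₁⟩ :=
    (continuous_phiFn d).exists_isFixedPt_mem_Ioo h0p.le (phiFn_pos hd 0) hp
  obtain ⟨z₂, hz₂, hfix₂⟩ := (continuous_phiFn d).exists_isFixedPt_mem_Ioo' hpq.le hp hq
  obtain ⟨z₃, hz₃, hfix₃⟩ :=
    (continuous_phiFn d).exists_isFixedPt_mem_Ioo hq1.le hq (phiFn_lt_one d 1)
  exact ⟨z₁, z₂, z₃, hz₁.2.trans hz₂.1, hz₂.2.trans hz₃.1,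
    .of_convex_concave (strictConvexOn_phiFn_sub_id hd) (strictConcaveOn_phiFn_sub_id hd) hp hq
      hz₁.2 hz₂ hz₃.1 hfix₁ hfix₂ hfix₃⟩

theorem mem_Icc_of_isFixedPt_phiFn (hd : 0 < d) {α : ℝ} (hα : IsFixedPt (phiFn d) α) :
    α ∈ Icc 0 1 :=
  ⟨hα.eq ▸ (phiFn_pos hd α).le, hα.eq ▸ (phiFn_lt_one d α).le⟩

namespace FixedPointPattern

variable {z₁ z₂ z₃ : ℝ}

theorem alphaMin_eq (hd : 0 < d) (h : FixedPointPattern (phiFn d) z₁ z₂ z₃) : alphaMin d = z₁ :=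
  IsLeast.csInf_eq ⟨⟨mem_Icc_of_isFixedPt_phiFn hd h.isFixedPt₁, h.isFixedPt₁⟩,
    fun _ hα => (h.mem_Icc_of_isFixedPt hα.2).1⟩

theorem alphaMax_eq (hd : 0 < d) (h : FixedPointPattern (phiFn d) z₁ z₂ z₃) : alphaMax d = z₃ :=
  IsGreatest.csSup_eq ⟨⟨mem_Icc_of_isFixedPt_phiFn hd h.isFixedPt₃, h.isFixedPt₃⟩,
    fun _ hα => (h.mem_Icc_of_isFixedPt hα.2).2⟩

end FixedPointPattern

theorem fixedPointPattern_alpha (hd : 0 < d) :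
    FixedPointPattern (phiFn d) (alphaMin d) (alphaMid d) (alphaMax d) := by
  by_cases hde : d ≤ exp 1
  · obtain ⟨z, hz⟩ := exists_fixedPointPattern_of_le_exp_one hd hde
    rwa [alphaMid, if_pos hde, hz.alphaMin_eq hd, hz.alphaMax_eq hd]
  · obtain ⟨z₁, z₂, z₃, h₁₂, h₂₃, hz⟩ := exists_fixedPointPattern_of_exp_one_lt (not_le.1 hde)
    have hmid : sInf {α | α ∈ Ioo z₁ z₃ ∧ phiFn d α = α} = z₂ :=
      IsLeast.csInf_eq ⟨⟨⟨h₁₂, h₂₃⟩, hz.isFixedPt₂⟩,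
        fun _ hα => (hz.eq_of_isFixedPt_of_mem_Ioo hα.2 hα.1).ge⟩
    rwa [alphaMid, if_neg hde, hz.alphaMin_eq hd, hz.alphaMax_eq hd, hmid]

/-- for any `d > 0` the iterates of `φ_d` converge to `α_*` from any
start in `[0, α_0)` and to `α^*` from any start in `(α_0, 1]`. -/
theorem statement5 (d : ℝ) (hd : 0 < d) :
    (∀ x : ℝ, 0 ≤ x → x < alphaMid d →
      Tendsto (fun t : ℕ => (phiFn d)^[t] x) atTop (𝓝 (alphaMin d))) ∧
    (∀ x : ℝ, alphaMid d < x → x ≤ 1 →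
      Tendsto (fun t : ℕ => (phiFn d)^[t] x) atTop (𝓝 (alphaMax d))) := by
  have h := fixedPointPattern_alpha hd
  have hmono := (strictMono_phiFn hd).monotone
  exact ⟨fun x _ hx => h.tendsto_iterate_of_lt hmono (continuous_phiFn d) hx,
    fun x hx _ => h.tendsto_iterate_of_gt hmono (continuous_phiFn d) hx⟩
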